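/- arXiv:1201.4912 — 6 statements merged into one kernel-verified Lean document; each statement's English description precedes it below -/
import Mathlib

section
/- Let q be a natural number with q > 2, and let G be a C₄-free simple graph on q²+q vertices with at least (1/2)·q·(q+1)² − q edges. Then the maximum degree of a vertex in G is at most q+2. -/
/-!
Suppose some vertex `v` has degree `d ≥ q + 3`, let `W` be the `m = q² + q - 1 - d` vertices
other than `v` not adjacent to it, and let `x u` count the neighbours of `u` in `W`. Since two
vertices have at most one common neighbour, a neighbour of `v` has degree at most `2 + x u`, a
vertex of `W` degree at most `1 + x u`, the sets of `W`-neighbours of the neighbours of `v` are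
disjoint (so `C = ∑_{N(v)} x ≤ m`), and no pair in `W` is covered twice (so
`∑ x (x - 1) ≤ m (m - 1)`). The edge count then forces `B + C` to be large, where
`B = ∑_W x`, while Cauchy–Schwarz on `N(v)` and on `W` separately bounds `C² / d + B² / m`
by `m (m - 1) + B + C`; the two are incompatible for `q ≥ 3`.
-/

open Finset

/-- A simple graph is `C₄`-free iff no two distinct vertices have two or more
common neighbors. -/
def C4Free {V : Type*} (G : SimpleGraph V) : Prop :=
  ∀ u v : V, u ≠ v → {w : V | G.Adj u w ∧ G.Adj v w}.Subsingleton

namespace SimpleGraph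

variable {V : Type*} (G : SimpleGraph V)

def closedNeighborFinset [DecidableEq V] [G.LocallyFinite] (v : V) : Finset V :=
  insert v (G.neighborFinset v)

variable [Fintype V] [DecidableRel G.Adj]

theorem mul_add_one_sq_le_sum_degrees_add {q : ℕ}
    (he : q * (q + 1) ^ 2 / 2 - q ≤ #G.edgeFinset) : q * (q + 1) ^ 2 ≤ ∑ u, G.degree u + 2 * q := by
  -- the natural-number division in `E₀` is exact
  obtain ⟨k, hk⟩ : Even (q * (q + 1) ^ 2) := by
    rw [sq, ← mul_assoc]
    exact (Nat.even_mul_succ_self q).mul_right _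
  rw [hk] at he
  rw [G.sum_degrees_eq_twice_card_edges, hk]
  omega

variable [DecidableEq V]

theorem degree_add_card_compl_closedNeighborFinset (v : V) :
    G.degree v + #(G.closedNeighborFinset v)ᶜ + 1 = Fintype.card V := by
  rw [card_compl, closedNeighborFinset, card_insert_of_notMem (G.notMem_neighborFinset_self v),
    card_neighborFinset_eq_degree]
  have := G.degree_lt_card_verts v
  omega

theorem sum_eq_add_sum_neighborFinset_add_sum_compl {M : Type*} [AddCommMonoid M] (f : V → M)
    (v : V) :
    ∑ u, f u = f v + ∑ u ∈ G.neighborFinset v, f u + ∑ u ∈ (G.closedNeighborFinset v)ᶜ, f u := by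
  rw [← sum_add_sum_compl (G.closedNeighborFinset v), closedNeighborFinset,
    sum_insert (G.notMem_neighborFinset_self v)]

theorem degree_eq_card_inter_add_card_inter_compl (u : V) (s : Finset V) :
    G.degree u = #(G.neighborFinset u ∩ s) + #(G.neighborFinset u ∩ sᶜ) := by
  rw [← sdiff_eq_inter_compl, card_inter_add_card_sdiff, card_neighborFinset_eq_degree]

end SimpleGraph

namespace C4Free

open SimpleGraph

variable {V : Type*} [DecidableEq V] {G : SimpleGraph V}

section LocallyFinite

variable [G.LocallyFinite]

theorem card_neighborFinset_inter_le_one (hG : C4Free G) {u v : V} (huv : u ≠ v) :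
    #(G.neighborFinset u ∩ G.neighborFinset v) ≤ 1 :=
  card_le_one.2 fun a ha b hb => by
    simp only [mem_inter, mem_neighborFinset] at ha hb
    exact hG u v huv ha hb

theorem sum_card_neighborFinset_inter_le (hG : C4Free G) {v : V} {s : Finset V} (hv : v ∉ s) :
    ∑ u ∈ G.neighborFinset v, #(G.neighborFinset u ∩ s) ≤ #s := by
  have hdisj : (G.neighborFinset v : Set V).PairwiseDisjoint fun u => G.neighborFinset u ∩ s := by
    intro u hu u' hu' huu'
    refine disjoint_left.2 fun w hw hw' => huu' ?_
    simp only [coe_neighborFinset, mem_neighborSet, mem_inter, mem_neighborFinset] at hu hu' hw hw'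
    exact hG v w (ne_of_mem_of_not_mem hw.2 hv).symm ⟨hu, hw.1.symm⟩ ⟨hu', hw'.1.symm⟩
  rw [← card_biUnion hdisj]
  exact card_le_card (biUnion_subset.2 fun u _ => inter_subset_right)

theorem sum_choose_two_le (hG : C4Free G) (s t : Finset V) :
    ∑ u ∈ t, (#(G.neighborFinset u ∩ s)).choose 2 ≤ (#s).choose 2 := by
  have hdisj : (t : Set V).PairwiseDisjoint fun u => (G.neighborFinset u ∩ s).powersetCard 2 := by
    intro u _ u' _ huu'
    refine disjoint_left.2 fun e he he' => huu' ?_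
    rw [mem_powersetCard] at he he'
    obtain ⟨a, ha, b, hb, hab⟩ := one_lt_card.1 (he.2 ▸ one_lt_two)
    have hu : ∀ y ∈ e, G.Adj y u := fun y hy =>
      ((G.mem_neighborFinset u y).1 (mem_inter.1 (he.1 hy)).1).symm
    have hu' : ∀ y ∈ e, G.Adj y u' := fun y hy =>
      ((G.mem_neighborFinset u' y).1 (mem_inter.1 (he'.1 hy)).1).symm
    exact hG a b hab ⟨hu a ha, hu b hb⟩ ⟨hu' a ha, hu' b hb⟩
  simp only [← card_powersetCard 2, ← card_biUnion hdisj]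
  exact card_le_card (biUnion_subset.2 fun u _ => powersetCard_mono inter_subset_right)

theorem sum_sq_sub_le (hG : C4Free G) (s t : Finset V) :
    ∑ u ∈ t, ((#(G.neighborFinset u ∩ s) : ℝ) ^ 2 - #(G.neighborFinset u ∩ s)) ≤
      #s * (#s - 1) := by
  have := (Nat.cast_le (α := ℝ)).2 (hG.sum_choose_two_le s t)
  push_cast [Nat.cast_choose_two, ← sum_div] at this
  simp only [mul_sub, mul_one, ← sq] at this
  linarith

end LocallyFinite

variable [Fintype V] [DecidableRel G.Adj]

theorem degree_le_two_add_of_adj (hG : C4Free G) {u v : V} (hvu : G.Adj v u) :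
    G.degree u ≤ 2 + #(G.neighborFinset u ∩ (G.closedNeighborFinset v)ᶜ) := by
  rw [G.degree_eq_card_inter_add_card_inter_compl u (G.closedNeighborFinset v),
    closedNeighborFinset, insert_inter]
  have := hG.card_neighborFinset_inter_le_one (G.ne_of_adj hvu).symm
  have := card_insert_le v (G.neighborFinset u ∩ G.neighborFinset v)
  split_ifs <;> omega

theorem degree_le_one_add_of_notMem (hG : C4Free G) {u v : V}
    (hu : u ∉ G.closedNeighborFinset v) :
    G.degree u ≤ 1 + #(G.neighborFinset u ∩ (G.closedNeighborFinset v)ᶜ) := by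
  simp only [closedNeighborFinset, mem_insert, mem_neighborFinset, not_or] at hu
  rw [G.degree_eq_card_inter_add_card_inter_compl u (G.closedNeighborFinset v),
    closedNeighborFinset, insert_inter, if_neg (by rw [mem_neighborFinset, G.adj_comm]; exact hu.2)]
  have := hG.card_neighborFinset_inter_le_one hu.1
  omega

theorem sum_degree_le (hG : C4Free G) (v : V) :
    ∑ u, G.degree u ≤ 3 * G.degree v + #(G.closedNeighborFinset v)ᶜ +
      ∑ u ∈ G.neighborFinset v, #(G.neighborFinset u ∩ (G.closedNeighborFinset v)ᶜ) +
      ∑ u ∈ (G.closedNeighborFinset v)ᶜ, #(G.neighborFinset u ∩ (G.closedNeighborFinset v)ᶜ) := by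
  have hnbr := sum_le_sum fun u hu =>
    hG.degree_le_two_add_of_adj ((G.mem_neighborFinset v u).1 hu)
  have hfar := sum_le_sum fun u (hu : u ∈ (G.closedNeighborFinset v)ᶜ) =>
    hG.degree_le_one_add_of_notMem (mem_compl.1 hu)
  rw [G.sum_eq_add_sum_neighborFinset_add_sum_compl _ v]
  simp only [sum_add_distrib, sum_const, smul_eq_mul, card_neighborFinset_eq_degree] at hnbr hfar
  omega

end C4Free

/-- The difference of the two sides is a quadratic in `C` with leading coefficient `q² + q - 1`;
expanded at `C = m`, its slope there is nonpositive and its value positive. -/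
lemma counting_quadratic_lt (q m C : ℝ) (hq : 3 ≤ q) (hm : 0 ≤ m) (hmq : m ≤ q ^ 2 - 4)
    (hCm : C ≤ m) :
    m * C * (q ^ 2 + q - 1 - m - C) + (q ^ 2 + q - 1 - m) * m ^ 2 * (m - 1) <
      (q ^ 2 + q - 1 - m) * (q ^ 3 - q ^ 2 - 4 * q + 3 + 2 * m - C) *
        (q ^ 3 - q ^ 2 - 4 * q + 3 + m - C) := by
  have hr : 0 ≤ q - 3 := by linarith
  have ha : 0 ≤ q ^ 2 - 4 - m := by linarith
  have hr2 : 0 ≤ (q - 3) * (q - 3) := mul_nonneg hr hr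
  have ha2 : 0 ≤ (q ^ 2 - 4 - m) * (q ^ 2 - 4 - m) := mul_nonneg ha ha
  have hslope : 0 ≤ (q ^ 2 + q - 1 - m) * (q ^ 3 - q ^ 2 - 4 * q + 3) +
      m * (q ^ 2 + q - 1 - 2 * m) := by
    nlinarith [mul_nonneg ha hm, mul_nonneg hr2 ha, mul_nonneg hr ha, mul_nonneg hr2 hr,
      mul_nonneg (mul_nonneg hr2 hr) ha]
  have hvalue : m ^ 2 * (q ^ 2 + q - 1 - 2 * m) + (q ^ 2 + q - 1 - m) * m ^ 2 * (m - 1) <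
      (q ^ 2 + q - 1 - m) * (q ^ 3 - q ^ 2 - 4 * q + 3 + m) * (q ^ 3 - q ^ 2 - 4 * q + 3) := by
    nlinarith [mul_nonneg hm ha, mul_nonneg hm ha2, mul_nonneg hm hr,
      mul_nonneg (mul_nonneg hm hr) ha, mul_nonneg (mul_nonneg hm hr) ha2,
      mul_nonneg hm hr2, mul_nonneg (mul_nonneg hm hr2) ha, mul_nonneg (mul_nonneg hm hr2) ha2,
      mul_nonneg (mul_nonneg hm hr2) hr, mul_nonneg (mul_nonneg (mul_nonneg hm hr2) hr) ha,
      mul_nonneg (mul_nonneg hm hm) ha2, mul_nonneg ha ha2, mul_nonneg ha2 ha2,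
      mul_nonneg hr ha, mul_nonneg hr ha2, mul_nonneg hr2 ha, mul_nonneg hr2 ha2,
      mul_nonneg (mul_nonneg hr2 ha) ha2]
  have hn : 0 ≤ q ^ 2 + q - 1 := by nlinarith
  linear_combination hvalue + 2 * mul_nonneg hslope (sub_nonneg.2 hCm) +
    mul_nonneg hn (sq_nonneg (m - C))

/-- Here `d` is the degree of the vertex, `m` the number of its non-neighbours, `C`, `B` the sums
of `x` over its neighbours and non-neighbours, and `X`, `Y` the corresponding sums of `x²`. -/
lemma false_of_counting_bounds (q d m C B X Y : ℝ) (hq : 3 ≤ q) (hd : q + 3 ≤ d) (hm : 0 ≤ m)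
    (hdm : d + m = q ^ 2 + q - 1) (hCm : C ≤ m) (hX : C ^ 2 ≤ d * X) (hY : B ^ 2 ≤ m * Y)
    (hXY : X - C + (Y - B) ≤ m * (m - 1))
    (hE : q * (q + 1) ^ 2 - 2 * q ≤ 3 * d + m + C + B) : False := by
  obtain rfl : d = q ^ 2 + q - 1 - m := by linarith
  have hB : q ^ 3 - q ^ 2 - 4 * q + 3 + 2 * m - C ≤ B := by linarith
  have hP : 0 ≤ q ^ 3 - q ^ 2 - 4 * q + 3 + m - C := by nlinarith
  have hBm : (q ^ 3 - q ^ 2 - 4 * q + 3 + 2 * m - C) * (q ^ 3 - q ^ 2 - 4 * q + 3 + m - C) ≤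
      B * (B - m) := mul_le_mul hB (by linarith) hP (by linarith)
  have hd0 : 0 ≤ q ^ 2 + q - 1 - m := by linarith
  have hCS : m * C ^ 2 + (q ^ 2 + q - 1 - m) * B ^ 2 ≤
      (q ^ 2 + q - 1 - m) * m * (m * (m - 1) + C + B) := by
    nlinarith [mul_le_mul_of_nonneg_left hX hm, mul_le_mul_of_nonneg_left hY hd0,
      mul_le_mul_of_nonneg_left hXY (mul_nonneg hd0 hm)]
  nlinarith [counting_quadratic_lt q m C hq hm (by linarith) hCm,
    mul_le_mul_of_nonneg_left hBm hd0]

/-- If `q > 2` and `G` is a `C₄`-free graph on `q² + q` vertices with at least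
`E₀ = q(q+1)²/2 - q` edges, then the maximum degree of `G` is at most `q + 2`. -/
theorem maxDegree_le_of_C4Free (q : ℕ) (hq : 2 < q)
    (G : SimpleGraph (Fin (q ^ 2 + q))) [DecidableRel G.Adj] (hG : C4Free G)
    (he : q * (q + 1) ^ 2 / 2 - q ≤ G.edgeFinset.card) :
    ∀ v, G.degree v ≤ q + 2 := by
  intro v
  by_contra! hdeg
  set N := G.neighborFinset v
  set W := (G.closedNeighborFinset v)ᶜ
  set x : Fin (q ^ 2 + q) → ℕ := fun u => #(G.neighborFinset u ∩ W)
  have hdm : (G.degree v : ℝ) + #W = q ^ 2 + q - 1 := by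
    have := G.degree_add_card_compl_closedNeighborFinset v
    rw [Fintype.card_fin] at this
    rw [eq_sub_iff_add_eq]
    exact_mod_cast this
  have hE : (q : ℝ) * (q + 1) ^ 2 - 2 * q ≤
      3 * G.degree v + #W + ∑ u ∈ N, (x u : ℝ) + ∑ u ∈ W, (x u : ℝ) := by
    have := (Nat.cast_le (α := ℝ)).2 ((G.mul_add_one_sq_le_sum_degrees_add he).trans
      (Nat.add_le_add_right (hG.sum_degree_le v) _))
    push_cast at this
    linarith
  have hCm : ∑ u ∈ N, (x u : ℝ) ≤ #W := by
    have hvW : v ∉ W := by simp [W, SimpleGraph.closedNeighborFinset]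
    exact_mod_cast hG.sum_card_neighborFinset_inter_le hvW
  have hCS : (∑ u ∈ N, (x u : ℝ)) ^ 2 ≤ G.degree v * ∑ u ∈ N, (x u : ℝ) ^ 2 := by
    rw [← G.card_neighborFinset_eq_degree]
    exact sq_sum_le_card_mul_sum_sq
  have hNW : Disjoint N W := disjoint_compl_right_iff.2 (subset_insert v N)
  have hpairs := hG.sum_sq_sub_le W (N ∪ W)
  rw [sum_union hNW, sum_sub_distrib, sum_sub_distrib] at hpairs
  exact false_of_counting_bounds q (G.degree v) #W _ _ _ _ (by exact_mod_cast hq)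
    (by exact_mod_cast hdeg) (by positivity) hdm hCm hCS sq_sum_le_card_mul_sum_sq hpairs hE
end

section
/- Let q be an even positive integer and let G be a C₄-free simple graph on q²+q vertices whose maximum degree is at most q+1. Then the number e of edges of G satisfies e ≤ (1/2)·q·(q+1)² − q. -/
open Finset

namespace SimpleGraph

variable {V : Type*} [Fintype V] (G : SimpleGraph V) [DecidableRel G.Adj]

theorem even_sum_card_neighborFinset_inter [DecidableEq V] (s : Finset V) :
    Even (∑ u ∈ s, #(G.neighborFinset u ∩ s)) := by
  have hdeg (u : (s : Set V)) : (G.induce s).degree u = #(G.neighborFinset u ∩ s) := by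
    have := congrArg card (G.map_neighborFinset_induce (s := (s : Set V)) u)
    rw [card_map, toFinset_coe] at this
    rw [← this, ← card_neighborFinset_eq_degree]
    -- the two sides differ only in their `Fintype` instances
    convert rfl
  rw [← sum_coe_sort s]
  simp_rw [← hdeg]
  exact ⟨_, (G.induce s).sum_degrees_eq_twice_card_edges.trans (two_mul _)⟩

theorem sum_sum_neighborFinset {M : Type*} [AddCommMonoid M] (f : V → M) :
    ∑ v, ∑ u ∈ G.neighborFinset v, f u = ∑ u, G.degree u • f u := by
  simp_rw [neighborFinset_eq_filter, sum_filter]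
  rw [sum_comm]
  refine sum_congr rfl fun u _ ↦ ?_
  rw [← sum_filter, sum_const, ← card_neighborFinset_eq_degree, neighborFinset_eq_filter]
  simp_rw [adj_comm]

theorem sum_card_neighborFinset_inter [DecidableEq V] (s : Finset V) :
    ∑ w, #(G.neighborFinset w ∩ s) = ∑ u ∈ s, G.degree u := by
  simp_rw [← filter_mem_eq_inter, card_filter, sum_sum_neighborFinset, smul_ite, smul_zero,
    sum_ite_mem, univ_inter, smul_eq_mul, mul_one]

theorem sum_tsub_degree_add_two_mul_card_edgeFinset {Δ : ℕ} (hΔ : ∀ v, G.degree v ≤ Δ) :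
    ∑ v, (Δ - G.degree v) + 2 * #G.edgeFinset = Fintype.card V * Δ := by
  rw [← sum_degrees_eq_twice_card_edges, ← sum_add_distrib]
  simp [Nat.sub_add_cancel (hΔ _)]

theorem card_le_card_filter_degree_eq_add_sum_tsub_degree {Δ : ℕ} (hΔ : ∀ v, G.degree v ≤ Δ) :
    Fintype.card V ≤ #{v | G.degree v = Δ} + ∑ v, (Δ - G.degree v) := by
  have hdeficient : #{v | ¬G.degree v = Δ} ≤ ∑ v, (Δ - G.degree v) :=
    calc #{v | ¬G.degree v = Δ} = ∑ v ∈ {v | ¬G.degree v = Δ}, 1 := card_eq_sum_ones _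
      _ ≤ ∑ v ∈ {v | ¬G.degree v = Δ}, (Δ - G.degree v) :=
          sum_le_sum fun v hv ↦ by have := hΔ v; simp only [mem_filter] at hv; omega
      _ ≤ ∑ v, (Δ - G.degree v) := sum_le_univ_sum_of_nonneg (by simp)
  rw [← card_univ, ← card_filter_add_card_filter_not (fun v ↦ G.degree v = Δ)]
  omega

theorem two_mul_card_le_mul_sum_tsub_degree {k : ℕ} (hΔ : ∀ v, G.degree v ≤ k + 1)
    (hfull : ∀ v, G.degree v = k + 1 → 2 ≤ ∑ u ∈ G.neighborFinset v, (k + 1 - G.degree u)) :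
    2 * Fintype.card V ≤ (k + 2) * ∑ v, (k + 1 - G.degree v) := by
  have hfull_le : 2 * #{v | G.degree v = k + 1} ≤ k * ∑ v, (k + 1 - G.degree v) :=
    calc 2 * #{v | G.degree v = k + 1}
        ≤ ∑ v ∈ {v | G.degree v = k + 1}, ∑ u ∈ G.neighborFinset v, (k + 1 - G.degree u) := by
          rw [mul_comm, ← smul_eq_mul]
          exact card_nsmul_le_sum _ _ _ fun v hv ↦ hfull v (mem_filter.1 hv).2
      _ ≤ ∑ v, ∑ u ∈ G.neighborFinset v, (k + 1 - G.degree u) :=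
          sum_le_univ_sum_of_nonneg (by simp)
      _ = ∑ u, G.degree u * (k + 1 - G.degree u) := G.sum_sum_neighborFinset _
      _ ≤ ∑ u, k * (k + 1 - G.degree u) := by
          refine sum_le_sum fun u _ ↦ ?_
          rcases (hΔ u).lt_or_eq with hlt | heq
          · exact Nat.mul_le_mul_right _ (by omega)
          · simp [heq]
      _ = k * ∑ v, (k + 1 - G.degree v) := (mul_sum ..).symm
  have := G.card_le_card_filter_degree_eq_add_sum_tsub_degree hΔ
  nlinarith

end SimpleGraph

section C4Free

variable {V : Type*} [Fintype V] [DecidableEq V] {G : SimpleGraph V} [DecidableRel G.Adj]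

theorem C4Free.card_neighborFinset_inter_le_one_s2 (hG : C4Free G) {u v : V} (huv : u ≠ v) :
    #(G.neighborFinset u ∩ G.neighborFinset v) ≤ 1 :=
  card_le_one.2 fun _ ha _ hb ↦ hG u v huv (by simpa using ha) (by simpa using hb)

theorem C4Free.sum_degree_neighborFinset_add_two_le (hG : C4Free G) {v : V}
    (hv : Odd (G.degree v)) :
    ∑ u ∈ G.neighborFinset v, G.degree u + 2 ≤ G.degree v + Fintype.card V := by
  set S := G.neighborFinset v
  set T := univ.erase v \ S
  have hS : #S = G.degree v := G.card_neighborFinset_eq_degree v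
  have hSv : S ⊆ univ.erase v := fun u hu ↦
    mem_erase.2 ⟨(G.ne_of_adj (by simpa [S] using hu)).symm, mem_univ u⟩
  have hT : #T + #S + 1 = Fintype.card V := by
    rw [card_sdiff_add_card_eq_card hSv, card_erase_add_one (mem_univ v), card_univ]
  have hcodegree {s : Finset V} (hs : s ⊆ univ.erase v) :
      ∑ w ∈ s, #(G.neighborFinset w ∩ S) ≤ #s := by
    simpa using sum_le_card_nsmul s _ 1 fun w hw ↦
      hG.card_neighborFinset_inter_le_one_s2 (ne_of_mem_erase (hs hw))
  -- the codegrees inside `S` have an even sum, which is at most the odd number `#S`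
  have hinside : ∑ w ∈ S, #(G.neighborFinset w ∩ S) + 1 ≤ #S := by
    have hle := hcodegree hSv
    obtain ⟨r, hr⟩ := G.even_sum_card_neighborFinset_inter S
    obtain ⟨t, ht⟩ := hv
    omega
  have houtside := hcodegree (s := T) sdiff_subset
  have hsplit : ∑ u ∈ S, G.degree u = #S + ∑ w ∈ S, #(G.neighborFinset w ∩ S)
      + ∑ w ∈ T, #(G.neighborFinset w ∩ S) := by
    rw [← G.sum_card_neighborFinset_inter, ← add_sum_erase _ _ (mem_univ v), ← sum_sdiff hSv,
      inter_self]
    ring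
  omega

theorem C4Free.two_le_sum_tsub_degree_neighborFinset (hG : C4Free G) {q : ℕ} (hq : Even q)
    (hcard : Fintype.card V = q ^ 2 + q) (hΔ : ∀ u, G.degree u ≤ q + 1) {v : V}
    (hv : G.degree v = q + 1) :
    2 ≤ ∑ u ∈ G.neighborFinset v, (q + 1 - G.degree u) := by
  have hsum := hG.sum_degree_neighborFinset_add_two_le (hv ▸ hq.add_one)
  have htotal : ∑ u ∈ G.neighborFinset v, (q + 1 - G.degree u)
      + ∑ u ∈ G.neighborFinset v, G.degree u = (q + 1) * (q + 1) := by
    rw [← sum_add_distrib]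
    simp [Nat.sub_add_cancel (hΔ _), hv]
  rw [hv, hcard] at hsum
  nlinarith

end C4Free

theorem card_edges_le_of_maxDegree_le_general (q : ℕ) (hqe : Even q)
    (G : SimpleGraph (Fin (q ^ 2 + q))) [DecidableRel G.Adj] (hG : C4Free G)
    (hΔ : ∀ v, G.degree v ≤ q + 1) :
    G.edgeFinset.card ≤ q * (q + 1) ^ 2 / 2 - q := by
  set D := ∑ v, (q + 1 - G.degree v)
  have hedges : D + 2 * #G.edgeFinset = (q ^ 2 + q) * (q + 1) := by
    simpa using G.sum_tsub_degree_add_two_mul_card_edgeFinset hΔ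
  have hD : 2 * (q ^ 2 + q) ≤ (q + 2) * D := by
    simpa using G.two_mul_card_le_mul_sum_tsub_degree hΔ
      fun v hv ↦ hG.two_le_sum_tsub_degree_neighborFinset hqe (Fintype.card_fin _) hΔ hv
  set X := q * (q + 1) ^ 2 / 2
  have hX : 2 * X = q * (q + 1) ^ 2 := Nat.two_mul_div_two_of_even (hqe.mul_right _)
  have hDE : D + 2 * #G.edgeFinset = 2 * X := by rw [hedges, hX]; ring
  have h2q : 2 * q ≤ D := by
    by_contra hlt
    -- `D` is even by `hDE`
    have : D + 2 ≤ 2 * q := by omega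
    nlinarith
  omega

/-- If `q` is even and positive and `G` is a `C₄`-free graph on `q² + q` vertices
with maximum degree at most `q + 1`, then `G` has at most `q(q+1)²/2 - q` edges. -/
theorem card_edges_le_of_maxDegree_le (q : ℕ) (hq : 0 < q) (hqe : Even q)
    (G : SimpleGraph (Fin (q ^ 2 + q))) [DecidableRel G.Adj] (hG : C4Free G)
    (hΔ : ∀ v, G.degree v ≤ q + 1) :
    G.edgeFinset.card ≤ q * (q + 1) ^ 2 / 2 - q :=
  card_edges_le_of_maxDegree_le_general q hqe G hG hΔ
end

section
/- Let q be an even integer with q ≥ 6 and let G be a C₄-free simple graph on q²+q vertices whose maximum degree is at most q+1 and whose number of edges equals (1/2)·q·(q+1)² − q. Then there exists a natural number z such that the numbers of vertices of each degree are given by one of the following two degree sequences: either |X_{q+1}| = q²−q+z, |X_q| = 2q−2z, |X_{q−1}| = z, |X_{q−2}| = 0 and all other degrees do not occur; or |X_{q+1}| = q²−q+z+1, |X_q| = 2q−2z−1, |X_{q−1}| = z−1, |X_{q−2}| = 1 and all other degrees do not occur. -/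
/-- `degCount G k` is the number of vertices of `G` of degree exactly `k`,
i.e. `|X_k|`. -/
def degCount {n : ℕ} (G : SimpleGraph (Fin n)) [DecidableRel G.Adj] (k : ℕ) : ℕ :=
  (Finset.univ.filter fun v => G.degree v = k).card

open Finset

lemma swap_count {α β : Type*} (s : Finset α) (t : Finset β)
    (r : α → β → Prop) [∀ a b, Decidable (r a b)] :
    ∑ x ∈ s, (t.filter fun y => r x y).card = ∑ y ∈ t, (s.filter fun x => r x y).card := by
  simp_rw [Finset.card_filter]
  exact Finset.sum_comm

lemma even_adj_pairs {V : Type*} [DecidableEq V] (G : SimpleGraph V) [DecidableRel G.Adj]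
    (S : Finset V) :
    Even (((S ×ˢ S).filter fun p => G.Adj p.1 p.2).card) := by
  have h : ∑ _p ∈ (S ×ˢ S).filter (fun p => G.Adj p.1 p.2), (1 : ZMod 2) = 0 := by
    apply Finset.sum_involution (fun p _ => Prod.swap p)
    · intro a _; decide
    · intro a ha _
      have hadj : G.Adj a.1 a.2 := (Finset.mem_filter.mp ha).2
      intro hc
      have : a.2 = a.1 := congrArg Prod.fst hc
      exact G.ne_of_adj hadj this.symm
    · intro a ha
      rcases Finset.mem_filter.mp ha with ⟨hm, hadj⟩
      rcases Finset.mem_product.mp hm with ⟨h1, h2⟩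
      exact Finset.mem_filter.mpr ⟨Finset.mem_product.mpr ⟨h2, h1⟩, hadj.symm⟩
    · intro a _; rfl
  have hc : ((((S ×ˢ S).filter fun p => G.Adj p.1 p.2).card : ℕ) : ZMod 2) = 0 := by
    rw [Finset.card_eq_sum_ones]
    push_cast
    simpa using h
  have := (ZMod.natCast_eq_zero_iff _ 2).mp hc
  exact even_iff_two_dvd.mpr this

lemma full_vertex {q : ℕ} (hq : 6 ≤ q) (hq2 : Even q)
    (G : SimpleGraph (Fin (q ^ 2 + q))) [DecidableRel G.Adj] (hG : C4Free G)
    (v : Fin (q ^ 2 + q)) (hv : G.degree v = q + 1) :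
    2 ≤ ∑ w ∈ G.neighborFinset v, ((q : ℤ) + 1 - G.degree w) := by
  set S := G.neighborFinset v with hS
  have hScard : S.card = q + 1 := hv
  have hvS : v ∉ S := by simp [hS]
  have key : ∀ u, u ≠ v → ∀ w w', G.Adj u w → G.Adj v w → G.Adj u w' →
      G.Adj v w' → w = w' := by
    intro u huv w w' h1 h2 h3 h4
    exact hG u v huv ⟨h1, h2⟩ ⟨h3, h4⟩
  have hdisj : ∀ w ∈ S, ∀ w' ∈ S, w ≠ w' →
      Disjoint ((G.neighborFinset w).erase v) ((G.neighborFinset w').erase v) := by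
    intro w hw w' hw' hne
    rw [Finset.disjoint_left]
    intro u hu hu'
    have huv : u ≠ v := Finset.ne_of_mem_erase hu
    have h1 : G.Adj u w := ((SimpleGraph.mem_neighborFinset _ _ _).mp
      (Finset.mem_of_mem_erase hu)).symm
    have h2 : G.Adj u w' := ((SimpleGraph.mem_neighborFinset _ _ _).mp
      (Finset.mem_of_mem_erase hu')).symm
    have h3 : G.Adj v w := (SimpleGraph.mem_neighborFinset _ _ _).mp hw
    have h4 : G.Adj v w' := (SimpleGraph.mem_neighborFinset _ _ _).mp hw'
    exact hne (key u huv w w' h1 h3 h2 h4)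
  set U : Finset (Fin (q ^ 2 + q)) := S.biUnion (fun w => (G.neighborFinset w).erase v)
    with hU
  have hUcard : U.card = ∑ w ∈ S, ((G.neighborFinset w).erase v).card :=
    Finset.card_biUnion hdisj
  set W : Finset (Fin (q ^ 2 + q)) := S.filter (fun w => ∀ u ∈ S, ¬ G.Adj w u) with hW
  set M : Finset (Fin (q ^ 2 + q)) := S.filter (fun w => ¬ ∀ u ∈ S, ¬ G.Adj w u) with hM
  have hWM : W.card + M.card = S.card :=
    Finset.card_filter_add_card_filter_not _
  -- each vertex of S has at most one neighbor in S
  have hle1 : ∀ w ∈ S, (S.filter fun u => G.Adj w u).card ≤ 1 := by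
    intro w hw
    apply Finset.card_le_one.mpr
    intro u hu u' hu'
    rcases Finset.mem_filter.mp hu with ⟨huS, hadj⟩
    rcases Finset.mem_filter.mp hu' with ⟨huS', hadj'⟩
    have hwv : w ≠ v := fun h => hvS (h ▸ hw)
    exact key w hwv u u' hadj ((SimpleGraph.mem_neighborFinset _ _ _).mp huS) hadj'
      ((SimpleGraph.mem_neighborFinset _ _ _).mp huS')
  have hMeven : Even M.card := by
    have hsum : ∑ w ∈ S, (S.filter fun u => G.Adj w u).card =
        ((S ×ˢ S).filter fun p => G.Adj p.1 p.2).card := by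
      rw [Finset.card_filter, Finset.sum_product]
      simp_rw [Finset.card_filter]
    have hsplit : ∑ w ∈ S, (S.filter fun u => G.Adj w u).card = M.card := by
      rw [← Finset.sum_filter_add_sum_filter_not S (fun w => ∀ u ∈ S, ¬ G.Adj w u)]
      have h0 : ∑ w ∈ W, (S.filter fun u => G.Adj w u).card = 0 := by
        apply Finset.sum_eq_zero
        intro w hw
        rcases Finset.mem_filter.mp hw with ⟨hwS, hnone⟩
        rw [Finset.card_eq_zero, Finset.filter_eq_empty_iff]
        intro u hu
        exact hnone u hu
      have h1 : ∑ w ∈ M, (S.filter fun u => G.Adj w u).card = M.card := by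
        rw [Finset.card_eq_sum_ones M]
        apply Finset.sum_congr rfl
        intro w hw
        rcases Finset.mem_filter.mp hw with ⟨hwS, hex⟩
        push_neg at hex
        rcases hex with ⟨u, huS, hadj⟩
        have hpos : 0 < (S.filter fun u => G.Adj w u).card :=
          Finset.card_pos.mpr ⟨u, Finset.mem_filter.mpr ⟨huS, hadj⟩⟩
        have := hle1 w hwS
        omega
      rw [← hW, ← hM, h0, h1, Nat.zero_add]
    rw [← hsplit, hsum]
    exact even_adj_pairs G S
  have hW1 : 1 ≤ W.card := by
    obtain ⟨k, hk⟩ := hMeven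
    obtain ⟨r, hr⟩ := hq2
    omega
  -- U and W are disjoint, don't contain v
  have hUW : Disjoint U W := by
    rw [Finset.disjoint_left]
    intro x hx hxW
    rcases Finset.mem_filter.mp hxW with ⟨hxS, hnone⟩
    rcases Finset.mem_biUnion.mp hx with ⟨w, hwS, hxw⟩
    have : G.Adj w x := (SimpleGraph.mem_neighborFinset _ _ _).mp (Finset.mem_of_mem_erase hxw)
    exact hnone w hwS this.symm
  have hsub : U ∪ W ⊆ Finset.univ.erase v := by
    intro x hx
    rcases Finset.mem_union.mp hx with hxU | hxW
    · rcases Finset.mem_biUnion.mp hxU with ⟨w, hwS, hxw⟩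
      exact Finset.mem_erase.mpr ⟨Finset.ne_of_mem_erase hxw, Finset.mem_univ _⟩
    · have hxS := (Finset.mem_filter.mp hxW).1
      have : x ≠ v := fun h => hvS (h ▸ hxS)
      exact Finset.mem_erase.mpr ⟨this, Finset.mem_univ _⟩
  have hcard_bound : U.card + W.card ≤ q ^ 2 + q - 1 := by
    have h1 : (U ∪ W).card = U.card + W.card := Finset.card_union_of_disjoint hUW
    have h2 : (U ∪ W).card ≤ (Finset.univ.erase v).card := Finset.card_le_card hsub
    have h3 : (Finset.univ.erase v).card = q ^ 2 + q - 1 := by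
      rw [Finset.card_erase_of_mem (Finset.mem_univ v)]
      simp
    omega
  -- cardinalities of erased neighborhoods
  have herase : ∀ w ∈ S, ((G.neighborFinset w).erase v).card = G.degree w - 1 := by
    intro w hw
    rw [Finset.card_erase_of_mem]
    · rfl
    · exact (SimpleGraph.mem_neighborFinset _ _ _).mpr
        ((SimpleGraph.mem_neighborFinset _ _ _).mp hw).symm
  have hdeg1 : ∀ w ∈ S, 1 ≤ G.degree w := by
    intro w hw
    have : v ∈ G.neighborFinset w := (SimpleGraph.mem_neighborFinset _ _ _).mpr
      ((SimpleGraph.mem_neighborFinset _ _ _).mp hw).symm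
    have := Finset.card_pos.mpr ⟨v, this⟩
    exact this
  -- integer computation
  have hUint : (U.card : ℤ) = ∑ w ∈ S, ((G.degree w : ℤ) - 1) := by
    rw [hUcard]
    push_cast
    apply Finset.sum_congr rfl
    intro w hw
    rw [herase w hw]
    have := hdeg1 w hw
    push_cast [Nat.cast_sub this]
    ring
  have hfinal : ∑ w ∈ S, ((G.degree w : ℤ)) ≤ (q:ℤ) ^ 2 + q - 1 + (q + 1) - W.card := by
    have h4 : (1:ℕ) ≤ q ^ 2 + q := by nlinarith
    have hcast : (U.card : ℤ) + (W.card : ℤ) ≤ (q:ℤ) ^ 2 + q - 1 := by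
      have h5 : ((U.card + W.card : ℕ) : ℤ) ≤ ((q ^ 2 + q - 1 : ℕ) : ℤ) :=
        Nat.cast_le.mpr hcard_bound
      rw [Nat.cast_sub h4] at h5
      push_cast at h5
      linarith
    have hsplit : ∑ w ∈ S, ((G.degree w : ℤ) - 1) = ∑ w ∈ S, (G.degree w : ℤ) - (q + 1) := by
      rw [Finset.sum_sub_distrib, Finset.sum_const, hScard]
      push_cast
      ring
    rw [hUint, hsplit] at hcast
    linarith
  have hWint : (1:ℤ) ≤ W.card := by exact_mod_cast hW1
  have hsum_tau : ∑ w ∈ S, ((q : ℤ) + 1 - G.degree w) =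
      ((q:ℤ) + 1) * (q + 1) - ∑ w ∈ S, (G.degree w : ℤ) := by
    rw [Finset.sum_sub_distrib, Finset.sum_const, hScard]
    push_cast
    ring
  rw [hsum_tau]
  nlinarith [hfinal, hWint]

set_option maxHeartbeats 1000000 in
/-- Let `q ≥ 6` be even and let `G` be a `C₄`-free graph on `q² + q` vertices
with maximum degree at most `q + 1` and exactly `E₀ = q(q+1)²/2 - q` edges.
Then for some parameter `z`, the degree sequence of `G` is one of:
`|X_{q+1}| = q² - q + z`, `|X_q| = 2q - 2z`, `|X_{q-1}| = z`, `|X_{q-2}| = 0`; or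
`|X_{q+1}| = q² - q + z + 1`, `|X_q| = 2q - 2z - 1`, `|X_{q-1}| = z - 1`,
`|X_{q-2}| = 1`; with no other degrees occurring. -/
theorem degree_sequence_of_extremal (q : ℕ) (hq : 6 ≤ q) (hqe : Even q)
    (G : SimpleGraph (Fin (q ^ 2 + q))) [DecidableRel G.Adj] (hG : C4Free G)
    (hΔ : ∀ v, G.degree v ≤ q + 1)
    (he : G.edgeFinset.card = q * (q + 1) ^ 2 / 2 - q) :
    ∃ z : ℕ,
      (∀ v, G.degree v = q + 1 ∨ G.degree v = q ∨ G.degree v = q - 1 ∨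
        G.degree v = q - 2) ∧
      (((degCount G (q + 1) : ℤ) = q ^ 2 - q + z ∧
          (degCount G q : ℤ) = 2 * q - 2 * z ∧
          (degCount G (q - 1) : ℤ) = z ∧
          (degCount G (q - 2) : ℤ) = 0) ∨
        ((degCount G (q + 1) : ℤ) = q ^ 2 - q + z + 1 ∧
          (degCount G q : ℤ) = 2 * q - 2 * z - 1 ∧
          (degCount G (q - 1) : ℤ) = z - 1 ∧
          (degCount G (q - 2) : ℤ) = 1)) := by
  obtain ⟨r, hr⟩ := hqe
  have hr3 : 3 ≤ r := by omega
  have hn : (Finset.univ : Finset (Fin (q ^ 2 + q))).card = q ^ 2 + q := by simp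
  -- edge and degree sums
  have hE : (G.edgeFinset.card : ℤ) = (r : ℤ) * (q + 1) ^ 2 - q := by
    have h1 : q * (q + 1) ^ 2 = 2 * (r * (q + 1) ^ 2) := by rw [hr]; ring
    have h2 : q * (q + 1) ^ 2 / 2 = r * (q + 1) ^ 2 := by
      rw [h1]; exact Nat.mul_div_cancel_left _ (by norm_num)
    have h3 : q ≤ r * (q + 1) ^ 2 := by nlinarith
    rw [he, h2, Nat.cast_sub h3]
    push_cast; ring
  have hsumdeg : ∑ v, (G.degree v : ℤ) = 2 * ((r : ℤ) * (q + 1) ^ 2 - q) := by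
    have h0 := G.sum_degrees_eq_twice_card_edges
    have h4 : ((∑ v, G.degree v : ℕ) : ℤ) = 2 * (G.edgeFinset.card : ℤ) := by
      exact_mod_cast congrArg (Nat.cast : ℕ → ℤ) h0
    rw [Nat.cast_sum] at h4
    rw [h4, hE]
  have hrz : (q : ℤ) = 2 * r := by exact_mod_cast hr.trans (two_mul r).symm
  have hτsum : ∑ v, ((q : ℤ) + 1 - (G.degree v : ℤ)) = 2 * q := by
    rw [Finset.sum_sub_distrib, Finset.sum_const, hn, hsumdeg]
    push_cast
    linear_combination ((q : ℤ) + 1) ^ 2 * hrz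
  -- the classes
  set A : Finset (Fin (q ^ 2 + q)) := Finset.univ.filter (fun v => G.degree v < q) with hA
  set T1 : Finset (Fin (q ^ 2 + q)) := Finset.univ.filter (fun v => G.degree v = q) with hT1
  set Ffull : Finset (Fin (q ^ 2 + q)) :=
    Finset.univ.filter (fun v => G.degree v = q + 1) with hF
  obtain ⟨σ, hσ⟩ : ∃ s : ℤ, s = ∑ w ∈ A, ((q : ℤ) + 1 - (G.degree w : ℤ)) := ⟨_, rfl⟩
  have hdisjTA : Disjoint T1 A := by
    rw [Finset.disjoint_left]
    intro v hv hv'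
    have h1 := (Finset.mem_filter.mp hv).2
    have h2 := (Finset.mem_filter.mp hv').2
    omega
  have hdisjF : Disjoint Ffull (T1 ∪ A) := by
    rw [Finset.disjoint_left]
    intro v hv hv'
    have h1 := (Finset.mem_filter.mp hv).2
    rcases Finset.mem_union.mp hv' with h | h
    · have h2 := (Finset.mem_filter.mp h).2; omega
    · have h2 := (Finset.mem_filter.mp h).2; omega
  have hunion : Ffull ∪ (T1 ∪ A) = Finset.univ := by
    ext v
    simp only [hA, hT1, hF, Finset.mem_union, Finset.mem_filter, Finset.mem_univ, true_and,
      iff_true]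
    have := hΔ v; omega
  have hpart1 : Ffull.card + (T1.card + A.card) = q ^ 2 + q := by
    rw [← Finset.card_union_of_disjoint hdisjTA, ← Finset.card_union_of_disjoint hdisjF,
      hunion, hn]
  have hT1σ : (T1.card : ℤ) + σ = 2 * q := by
    have hsplit : (∑ v ∈ Ffull, ((q : ℤ) + 1 - (G.degree v : ℤ)))
        + (∑ v ∈ T1, ((q : ℤ) + 1 - (G.degree v : ℤ)) + σ) = 2 * q := by
      rw [hσ, ← Finset.sum_union hdisjTA, ← Finset.sum_union hdisjF, hunion]
      exact hτsum
    have hF0 : ∑ v ∈ Ffull, ((q : ℤ) + 1 - (G.degree v : ℤ)) = 0 := by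
      apply Finset.sum_eq_zero
      intro v hv
      have h1 := (Finset.mem_filter.mp hv).2
      rw [h1]; push_cast; ring
    have hT1v : ∑ v ∈ T1, ((q : ℤ) + 1 - (G.degree v : ℤ)) = (T1.card : ℤ) := by
      have hone : ∀ v ∈ T1, ((q : ℤ) + 1 - (G.degree v : ℤ)) = 1 := by
        intro v hv
        have h1 := (Finset.mem_filter.mp hv).2
        rw [h1]; push_cast; ring
      rw [Finset.sum_congr rfl hone, Finset.sum_const, nsmul_eq_mul, mul_one]
    rw [hF0, hT1v] at hsplit
    linarith
  have hA2 : ∀ w ∈ A, (2 : ℤ) ≤ (q : ℤ) + 1 - (G.degree w : ℤ) := by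
    intro w hw
    have h1 := (Finset.mem_filter.mp hw).2
    have h2 : ((G.degree w : ℤ)) < q := by exact_mod_cast h1
    linarith
  have hσ2a : 2 * (A.card : ℤ) ≤ σ := by
    have h5 := Finset.card_nsmul_le_sum A (fun w => (q : ℤ) + 1 - (G.degree w : ℤ)) 2 hA2
    rw [nsmul_eq_mul] at h5
    rw [hσ]
    linarith
  -- FA / FB
  set FA : Finset (Fin (q ^ 2 + q)) := Ffull.filter (fun v => ∃ w ∈ A, G.Adj v w) with hFA
  set FB : Finset (Fin (q ^ 2 + q)) := Ffull.filter (fun v => ¬ ∃ w ∈ A, G.Adj v w) with hFB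
  have hFAB : FA.card + FB.card = Ffull.card :=
    Finset.card_filter_add_card_filter_not _
  have hK1 : FA.card ≤ ∑ w ∈ A, G.degree w := by
    calc FA.card = ∑ _v ∈ FA, 1 := by rw [Finset.card_eq_sum_ones]
    _ ≤ ∑ v ∈ FA, (A.filter fun w => G.Adj v w).card := by
        apply Finset.sum_le_sum
        intro v hv
        have hex := (Finset.mem_filter.mp hv).2
        rcases hex with ⟨w, hwA, hadj⟩
        exact Finset.card_pos.mpr ⟨w, Finset.mem_filter.mpr ⟨hwA, hadj⟩⟩
    _ = ∑ w ∈ A, (FA.filter fun v => G.Adj v w).card := swap_count _ _ _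
    _ ≤ ∑ w ∈ A, G.degree w := by
        apply Finset.sum_le_sum
        intro w hw
        rw [← SimpleGraph.card_neighborFinset_eq_degree]
        apply Finset.card_le_card
        intro v hv
        have hadj := (Finset.mem_filter.mp hv).2
        exact (SimpleGraph.mem_neighborFinset _ _ _).mpr hadj.symm
  have hK2 : ∀ v ∈ FB, 2 ≤ (T1.filter fun w => G.Adj v w).card := by
    intro v hv
    have hvF := (Finset.mem_filter.mp hv).1
    have hnoA := (Finset.mem_filter.mp hv).2
    have hvdeg : G.degree v = q + 1 := (Finset.mem_filter.mp hvF).2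
    have h2 := full_vertex hq ⟨r, hr⟩ G hG v hvdeg
    have hN : ∀ w ∈ G.neighborFinset v, G.degree w = q ∨ G.degree w = q + 1 := by
      intro w hw
      have hadj : G.Adj v w := (SimpleGraph.mem_neighborFinset _ _ _).mp hw
      have hnlt : ¬ G.degree w < q := fun hlt =>
        hnoA ⟨w, Finset.mem_filter.mpr ⟨Finset.mem_univ _, hlt⟩, hadj⟩
      have := hΔ w
      omega
    have hsum_eq : ∑ w ∈ G.neighborFinset v, ((q : ℤ) + 1 - (G.degree w : ℤ))
        = (((G.neighborFinset v).filter fun w => G.degree w = q).card : ℤ) := by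
      rw [← Finset.sum_filter_add_sum_filter_not (G.neighborFinset v)
        (fun w => G.degree w = q)]
      have hone : ∀ w ∈ (G.neighborFinset v).filter (fun w => G.degree w = q),
          ((q : ℤ) + 1 - (G.degree w : ℤ)) = 1 := by
        intro w hw
        have h1 := (Finset.mem_filter.mp hw).2
        rw [h1]; push_cast; ring
      have e1 : ∑ w ∈ (G.neighborFinset v).filter (fun w => G.degree w = q),
          ((q : ℤ) + 1 - (G.degree w : ℤ))
          = (((G.neighborFinset v).filter fun w => G.degree w = q).card : ℤ) := by
        rw [Finset.sum_congr rfl hone, Finset.sum_const, nsmul_eq_mul, mul_one]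
      have e2 : ∑ w ∈ (G.neighborFinset v).filter (fun w => ¬ G.degree w = q),
          ((q : ℤ) + 1 - (G.degree w : ℤ)) = 0 := by
        apply Finset.sum_eq_zero
        intro w hw
        have h1 := (Finset.mem_filter.mp hw).2
        have h2 := hN w (Finset.mem_filter.mp hw).1
        have h3 : G.degree w = q + 1 := by tauto
        rw [h3]; push_cast; ring
      rw [e1, e2, add_zero]
    have hsets : (G.neighborFinset v).filter (fun w => G.degree w = q)
        = T1.filter (fun w => G.Adj v w) := by
      ext w
      simp only [Finset.mem_filter, SimpleGraph.mem_neighborFinset, hT1, Finset.mem_univ,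
        true_and]
      tauto
    rw [hsum_eq, hsets] at h2
    exact_mod_cast h2
  have hK4 : 2 * FB.card ≤ ∑ v ∈ FB, (T1.filter fun w => G.Adj v w).card := by
    have h5 := Finset.card_nsmul_le_sum FB (fun v => (T1.filter fun w => G.Adj v w).card) 2 hK2
    rw [smul_eq_mul] at h5
    omega
  have hK3 : ∑ v ∈ FB, (T1.filter fun w => G.Adj v w).card ≤ T1.card * q := by
    rw [swap_count]
    calc ∑ w ∈ T1, (FB.filter fun v => G.Adj v w).card ≤ ∑ w ∈ T1, G.degree w := by
          apply Finset.sum_le_sum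
          intro w hw
          rw [← SimpleGraph.card_neighborFinset_eq_degree]
          apply Finset.card_le_card
          intro v hv
          have hadj := (Finset.mem_filter.mp hv).2
          exact (SimpleGraph.mem_neighborFinset _ _ _).mpr hadj.symm
    _ = T1.card * q := by
        have hq' : ∀ w ∈ T1, G.degree w = q := fun w hw => (Finset.mem_filter.mp hw).2
        rw [Finset.sum_congr rfl hq', Finset.sum_const, smul_eq_mul]
  have hAdeg : ∑ w ∈ A, (G.degree w : ℤ) = ((q : ℤ) + 1) * A.card - σ := by
    have h1 : σ = (A.card : ℤ) * ((q : ℤ) + 1) - ∑ w ∈ A, (G.degree w : ℤ) := by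
      rw [hσ, Finset.sum_sub_distrib, Finset.sum_const, nsmul_eq_mul]
    linarith
  -- the excess inequality
  have hexcess : σ ≤ 2 * (A.card : ℤ) + 1 := by
    by_contra hcon
    push_neg at hcon
    have hcon' : 2 * (A.card : ℤ) + 2 ≤ σ := by linarith
    have i1 : (FA.card : ℤ) ≤ ((q : ℤ) + 1) * A.card - σ := by
      have hc : ((FA.card : ℕ) : ℤ) ≤ ((∑ w ∈ A, G.degree w : ℕ) : ℤ) := Nat.cast_le.mpr hK1
      rw [Nat.cast_sum] at hc
      rw [hAdeg] at hc
      exact hc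
    have i2 : 2 * (FB.card : ℤ) ≤ (T1.card : ℤ) * q := by
      have h5 : 2 * FB.card ≤ T1.card * q := le_trans hK4 hK3
      exact_mod_cast h5
    have i3 : (FA.card : ℤ) + FB.card = Ffull.card := by exact_mod_cast hFAB
    have i4 : (Ffull.card : ℤ) + ((T1.card : ℤ) + A.card) = (q : ℤ) ^ 2 + q := by
      exact_mod_cast hpart1
    have p1 : (T1.card : ℤ) = 2 * q - σ := by linarith
    have e1 : (T1.card : ℤ) * q = (2 * q - σ) * q := by rw [p1]
    have e3 : (2 * (A.card : ℤ) + 2) * ((q : ℤ) + 4) ≤ σ * ((q : ℤ) + 4) := by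
      apply mul_le_mul_of_nonneg_right hcon'
      positivity
    have hAnn : (0 : ℤ) ≤ A.card := Int.natCast_nonneg _
    nlinarith [i1, i2, i3, i4, e1, e3, hAnn]
  -- minimum degree
  have hmin : ∀ v, q ≤ G.degree v + 2 := by
    intro v
    by_contra hvlt
    push_neg at hvlt
    have hvA : v ∈ A := Finset.mem_filter.mpr ⟨Finset.mem_univ _, by omega⟩
    have hτv : (4 : ℤ) ≤ (q : ℤ) + 1 - G.degree v := by
      have h6 : G.degree v + 3 ≤ q := by omega
      have : ((G.degree v : ℤ)) + 3 ≤ q := by exact_mod_cast h6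
      linarith
    have hsplit : ((q : ℤ) + 1 - G.degree v)
        + ∑ w ∈ A.erase v, ((q : ℤ) + 1 - (G.degree w : ℤ)) = σ := by
      rw [hσ]
      exact Finset.add_sum_erase A (fun w => (q : ℤ) + 1 - (G.degree w : ℤ)) hvA
    have h2 : 2 * ((A.erase v).card : ℤ)
        ≤ ∑ w ∈ A.erase v, ((q : ℤ) + 1 - (G.degree w : ℤ)) := by
      have h5 := Finset.card_nsmul_le_sum (A.erase v)
        (fun w => (q : ℤ) + 1 - (G.degree w : ℤ)) 2
        (fun w hw => hA2 w (Finset.mem_of_mem_erase hw))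
      rw [nsmul_eq_mul] at h5
      linarith
    have hcarde : (A.erase v).card = A.card - 1 := Finset.card_erase_of_mem hvA
    have hA1 : 1 ≤ A.card := Finset.card_pos.mpr ⟨v, hvA⟩
    have hcz : ((A.erase v).card : ℤ) = (A.card : ℤ) - 1 := by
      rw [hcarde, Nat.cast_sub hA1]
      simp
    rw [hcz] at h2
    linarith [hexcess, hτv, hsplit, h2]
  have hdeg4 : ∀ v, G.degree v = q + 1 ∨ G.degree v = q ∨ G.degree v = q - 1 ∨
      G.degree v = q - 2 := by
    intro v
    have := hΔ v
    have := hmin v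
    omega
  -- final classes
  set c3 : Finset (Fin (q ^ 2 + q)) := Finset.univ.filter (fun v => G.degree v = q - 1)
    with hc3
  set c4 : Finset (Fin (q ^ 2 + q)) := Finset.univ.filter (fun v => G.degree v = q - 2)
    with hc4
  have hAeq : A = c3 ∪ c4 := by
    ext v
    simp only [hA, hc3, hc4, Finset.mem_union, Finset.mem_filter, Finset.mem_univ, true_and]
    have := hmin v
    omega
  have hdisj34 : Disjoint c3 c4 := by
    rw [Finset.disjoint_left]
    intro v hv hv'
    have h1 := (Finset.mem_filter.mp hv).2
    have h2 := (Finset.mem_filter.mp hv').2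
    omega
  have hAcard : A.card = c3.card + c4.card := by
    rw [hAeq, Finset.card_union_of_disjoint hdisj34]
  have hσval : σ = 2 * (c3.card : ℤ) + 3 * (c4.card : ℤ) := by
    rw [hσ, hAeq, Finset.sum_union hdisj34]
    have hone3 : ∀ w ∈ c3, ((q : ℤ) + 1 - (G.degree w : ℤ)) = 2 := by
      intro w hw
      have h1 := (Finset.mem_filter.mp hw).2
      have h2 : ((G.degree w : ℤ)) = (q : ℤ) - 1 := by
        rw [h1, Nat.cast_sub (by omega : 1 ≤ q)]
        simp
      rw [h2]; ring
    have hone4 : ∀ w ∈ c4, ((q : ℤ) + 1 - (G.degree w : ℤ)) = 3 := by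
      intro w hw
      have h1 := (Finset.mem_filter.mp hw).2
      have h2 : ((G.degree w : ℤ)) = (q : ℤ) - 2 := by
        rw [h1, Nat.cast_sub (by omega : 2 ≤ q)]
        simp
      rw [h2]; ring
    rw [Finset.sum_congr rfl hone3, Finset.sum_congr rfl hone4, Finset.sum_const,
      Finset.sum_const, nsmul_eq_mul, nsmul_eq_mul]
    ring
  have hd1 : c4.card ≤ 1 := by
    have hAz : (A.card : ℤ) = (c3.card : ℤ) + c4.card := by exact_mod_cast hAcard
    have h7 : (c4.card : ℤ) ≤ 1 := by linarith [hexcess, hσval, hAz]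
    exact_mod_cast h7
  -- identify degCounts
  have hdc1 : degCount G (q + 1) = Ffull.card := rfl
  have hdc2 : degCount G q = T1.card := rfl
  have hdc3 : degCount G (q - 1) = c3.card := rfl
  have hdc4 : degCount G (q - 2) = c4.card := rfl
  have E1 : (Ffull.card : ℤ) + T1.card + c3.card + c4.card = (q : ℤ) ^ 2 + q := by
    have h8 : Ffull.card + (T1.card + (c3.card + c4.card)) = q ^ 2 + q := by
      rw [← hAcard]; exact hpart1
    have h9 : ((Ffull.card + (T1.card + (c3.card + c4.card)) : ℕ) : ℤ)
        = ((q ^ 2 + q : ℕ) : ℤ) := by exact_mod_cast congrArg (Nat.cast : ℕ → ℤ) h8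
    push_cast at h9
    linarith
  have E2 : (T1.card : ℤ) + 2 * c3.card + 3 * c4.card = 2 * q := by
    linarith [hT1σ, hσval]
  rcases Nat.le_one_iff_eq_zero_or_eq_one.mp hd1 with hD | hD
  · have hDz : (c4.card : ℤ) = 0 := by exact_mod_cast hD
    refine ⟨c3.card, hdeg4, Or.inl ⟨?_, ?_, ?_, ?_⟩⟩
    · rw [hdc1]; push_cast; linarith
    · rw [hdc2]; push_cast; linarith
    · rw [hdc3]
    · rw [hdc4]; exact hDz
  · have hDz : (c4.card : ℤ) = 1 := by exact_mod_cast hD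
    refine ⟨c3.card + 1, hdeg4, Or.inr ⟨?_, ?_, ?_, ?_⟩⟩
    · rw [hdc1]; push_cast; linarith
    · rw [hdc2]; push_cast; linarith
    · rw [hdc3]; push_cast; ring
    · rw [hdc4]; exact hDz
end

section
/- Let q be an even integer with q ≥ 6 and let G be a C₄-free simple graph on q²+q vertices with maximum degree at most q+1 and at least (1/2)·q·(q+1)² − q edges. If v is a vertex of degree q+1 that is adjacent to no vertex of degree at most q−1, then v is adjacent to at least two vertices of degree exactly q. -/
/-- Let `q ≥ 6` be even and let `G` be a `C₄`-free graph on `q² + q` vertices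
with maximum degree at most `q + 1` and at least `E₀ = q(q+1)²/2 - q` edges.
If `v` has degree `q + 1` and is adjacent to no vertex of degree at most
`q - 1`, then `v` is adjacent to at least two vertices of degree exactly `q`. -/
theorem two_neighbors_of_degree_q (q : ℕ) (hq : 6 ≤ q) (hqe : Even q)
    (G : SimpleGraph (Fin (q ^ 2 + q))) [DecidableRel G.Adj] (hG : C4Free G)
    (hΔ : ∀ v, G.degree v ≤ q + 1)
    (he : q * (q + 1) ^ 2 / 2 - q ≤ G.edgeFinset.card)
    (v : Fin (q ^ 2 + q)) (hv : G.degree v = q + 1)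
    (hno : ∀ w, G.Adj v w → ¬ G.degree w ≤ q - 1) :
    2 ≤ ((G.neighborFinset v).filter fun w => G.degree w = q).card := by
  by_contra hcon
  push_neg at hcon
  set N := G.neighborFinset v with hN
  have hvN : v ∉ N := by simp [hN]
  have hcardN : N.card = q + 1 := by
    rw [hN, G.card_neighborFinset_eq_degree, hv]
  have hmemN : ∀ u, u ∈ N ↔ G.Adj v u := fun u => by simp [hN]
  have hdeg : ∀ u ∈ N, G.degree u = q ∨ G.degree u = q + 1 := by
    intro u hu
    have h1 := hno u ((hmemN u).1 hu)
    have h2 := hΔ u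
    omega
  -- Sum of degrees over N
  set F := N.filter (fun w => G.degree w = q) with hF
  have hFcard : F.card ≤ 1 := by omega
  have hFsub : F ⊆ N := Finset.filter_subset _ _
  have hsum : q ^ 2 + 2 * q ≤ ∑ u ∈ N, G.degree u := by
    have h1 : ∀ u ∈ N \ F, G.degree u = q + 1 := by
      intro u hu
      rw [Finset.mem_sdiff] at hu
      have h3 := hdeg u hu.1
      have h4 : ¬ G.degree u = q := fun h => hu.2 (Finset.mem_filter.mpr ⟨hu.1, h⟩)
      omega
    have h2 : ∑ u ∈ N \ F, G.degree u = (q + 1) * (q + 1 - F.card) := by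
      rw [Finset.sum_congr rfl h1, Finset.sum_const, smul_eq_mul, mul_comm,
        Finset.card_sdiff_of_subset hFsub, hcardN]
    have h3 : ∑ u ∈ F, G.degree u = q * F.card := by
      rw [Finset.sum_congr rfl (fun u hu => (Finset.mem_filter.mp hu).2),
        Finset.sum_const, smul_eq_mul, mul_comm]
    have h4 : ∑ u ∈ N, G.degree u = (q + 1) * (q + 1 - F.card) + q * F.card := by
      rw [← Finset.sum_sdiff hFsub, h2, h3]
    rw [h4]
    rcases Nat.le_one_iff_eq_zero_or_eq_one.mp hFcard with h | h <;> rw [h] <;> simp <;> nlinarith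
  -- each u in N has at most one neighbor in N
  have hm : ∀ u ∈ N, (N.filter (G.Adj u)).card ≤ 1 := by
    intro u hu
    have hadj : G.Adj v u := (hmemN u).1 hu
    have hne : u ≠ v := hadj.symm.ne
    apply Finset.card_le_one.mpr
    intro a ha b hb
    rw [Finset.mem_filter] at ha hb
    have ha1 : G.Adj v a := (hmemN a).1 ha.1
    have hb1 : G.Adj v b := (hmemN b).1 hb.1
    exact hG u v hne ⟨ha.2, ha1⟩ ⟨hb.2, hb1⟩
  -- the outside neighborhoods
  set A : Fin (q ^ 2 + q) → Finset (Fin (q ^ 2 + q)) :=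
    fun u => G.neighborFinset u \ insert v N with hA
  have hAcard : ∀ u ∈ N, G.degree u ≤ (A u).card + 1 + (N.filter (G.Adj u)).card := by
    intro u hu
    have hsub2 : G.neighborFinset u ⊆ A u ∪ insert v (N.filter (G.Adj u)) := by
      intro w hw
      by_cases hwv : w ∈ insert v N
      · rcases Finset.mem_insert.mp hwv with h | h
        · exact Finset.mem_union_right _ (h ▸ Finset.mem_insert_self _ _)
        · exact Finset.mem_union_right _ (Finset.mem_insert.mpr (Or.inr
            (Finset.mem_filter.mpr ⟨h, (G.mem_neighborFinset u w).mp hw⟩)))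
      · exact Finset.mem_union_left _ (Finset.mem_sdiff.mpr ⟨hw, hwv⟩)
    calc G.degree u = (G.neighborFinset u).card := rfl
      _ ≤ (A u ∪ insert v (N.filter (G.Adj u))).card := Finset.card_le_card hsub2
      _ ≤ (A u).card + (insert v (N.filter (G.Adj u))).card := Finset.card_union_le _ _
      _ ≤ (A u).card + ((N.filter (G.Adj u)).card + 1) := by
          exact Nat.add_le_add_left (Finset.card_insert_le _ _) _
      _ = (A u).card + 1 + (N.filter (G.Adj u)).card := by ring
  have hdisj : ∀ x ∈ N, ∀ y ∈ N, x ≠ y → Disjoint (A x) (A y) := by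
    intro x hx y hy hxy
    rw [Finset.disjoint_left]
    intro w hwx hwy
    have h1 := Finset.mem_sdiff.mp hwx
    have h2 := Finset.mem_sdiff.mp hwy
    have hadjx : G.Adj x w := (G.mem_neighborFinset x w).mp h1.1
    have hadjy : G.Adj y w := (G.mem_neighborFinset y w).mp h2.1
    have hveq : w = v := hG x y hxy ⟨hadjx, hadjy⟩
      ⟨((hmemN x).1 hx).symm, ((hmemN y).1 hy).symm⟩
    exact h1.2 (hveq ▸ Finset.mem_insert_self v N)
  -- parity of M
  set M := ∑ u ∈ N, (N.filter (G.Adj u)).card with hM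
  have hMle : M ≤ q + 1 := by
    calc M ≤ ∑ _u ∈ N, 1 := Finset.sum_le_sum hm
      _ = N.card := by simp
      _ = q + 1 := hcardN
  have hMeven : Even M := by
    set P := (N ×ˢ N).filter (fun p => G.Adj p.1 p.2) with hP
    have hPcard : P.card = M := by
      rw [hM, Finset.card_eq_sum_card_fiberwise (f := Prod.fst) (s := P) (t := N)
        (fun p hp => (Finset.mem_product.mp (Finset.mem_filter.mp hp).1).1)]
      apply Finset.sum_congr rfl
      intro u hu
      have himg : P.filter (fun p => p.1 = u)
          = (N.filter (G.Adj u)).image (fun w => (u, w)) := by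
        ext p
        simp only [hP, Finset.mem_filter, Finset.mem_product, Finset.mem_image]
        constructor
        · rintro ⟨⟨⟨h1, h2⟩, h3⟩, h4⟩
          exact ⟨p.2, ⟨h2, h4 ▸ h3⟩, by rw [← h4]⟩
        · rintro ⟨w, ⟨hw1, hw2⟩, hw3⟩
          rw [← hw3]
          exact ⟨⟨⟨hu, hw1⟩, hw2⟩, rfl⟩
      rw [himg, Finset.card_image_of_injective _ (fun a b h => (Prod.mk.injEq u a u b).mp h |>.2)]
    have hsplit : P = P.filter (fun p => p.1 < p.2) ∪ P.filter (fun p => p.2 < p.1) := by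
      ext p
      simp only [Finset.mem_union, Finset.mem_filter]
      constructor
      · intro h
        have hne : p.1 ≠ p.2 := ((Finset.mem_filter.mp h).2).ne
        rcases lt_or_gt_of_ne hne with h' | h'
        · exact Or.inl ⟨h, h'⟩
        · exact Or.inr ⟨h, h'⟩
      · rintro (⟨h, _⟩ | ⟨h, _⟩) <;> exact h
    have hd2 : Disjoint (P.filter (fun p => p.1 < p.2)) (P.filter (fun p => p.2 < p.1)) := by
      rw [Finset.disjoint_left]
      intro p h1 h2
      exact absurd (Finset.mem_filter.mp h2).2 (not_lt.mpr (le_of_lt (Finset.mem_filter.mp h1).2))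
    have hcards : (P.filter (fun p => p.1 < p.2)).card = (P.filter (fun p => p.2 < p.1)).card := by
      apply Finset.card_bij (fun p _ => (p.2, p.1))
      · intro p hp
        rw [Finset.mem_filter] at hp ⊢
        obtain ⟨hp1, hp2⟩ := hp
        rw [hP, Finset.mem_filter, Finset.mem_product] at hp1 ⊢
        exact ⟨⟨⟨hp1.1.2, hp1.1.1⟩, hp1.2.symm⟩, hp2⟩
      · intro p _ p' _ h
        have := Prod.mk.injEq p.2 p.1 p'.2 p'.1 ▸ h
        simp only [Prod.mk.injEq] at h
        exact Prod.ext h.2 h.1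
      · intro p hp
        rw [Finset.mem_filter] at hp
        obtain ⟨hp1, hp2⟩ := hp
        rw [hP, Finset.mem_filter, Finset.mem_product] at hp1
        refine ⟨(p.2, p.1), ?_, rfl⟩
        rw [Finset.mem_filter, hP, Finset.mem_filter, Finset.mem_product]
        exact ⟨⟨⟨hp1.1.2, hp1.1.1⟩, hp1.2.symm⟩, hp2⟩
    rw [← hPcard, hsplit, Finset.card_union_of_disjoint hd2, hcards]
    exact ⟨_, rfl⟩
  have hMq : M ≤ q := by
    obtain ⟨k, hk⟩ := hMeven
    obtain ⟨j, hj⟩ := hqe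
    omega
  -- counting vertices
  have hbu : (N.biUnion A).card = ∑ u ∈ N, (A u).card := Finset.card_biUnion hdisj
  have hdisjIns : Disjoint (N.biUnion A) (insert v N) := by
    rw [Finset.disjoint_left]
    intro w hw hw2
    obtain ⟨u, _, hwu⟩ := Finset.mem_biUnion.mp hw
    exact (Finset.mem_sdiff.mp hwu).2 hw2
  have hAsum : ∑ u ∈ N, (A u).card + (q + 2) ≤ q ^ 2 + q := by
    calc ∑ u ∈ N, (A u).card + (q + 2)
        = (N.biUnion A ∪ insert v N).card := by
          rw [Finset.card_union_of_disjoint hdisjIns, hbu,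
            Finset.card_insert_of_notMem hvN, hcardN]
      _ ≤ Fintype.card (Fin (q ^ 2 + q)) := Finset.card_le_univ _
      _ = q ^ 2 + q := Fintype.card_fin _
  have hfinal : ∑ u ∈ N, G.degree u
      ≤ ∑ u ∈ N, (A u).card + (q + 1) + M := by
    calc ∑ u ∈ N, G.degree u
        ≤ ∑ u ∈ N, ((A u).card + 1 + (N.filter (G.Adj u)).card) := Finset.sum_le_sum hAcard
      _ = ∑ u ∈ N, (A u).card + N.card + M := by
          rw [Finset.sum_add_distrib, Finset.sum_add_distrib, Finset.sum_const, smul_eq_mul, mul_one]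
      _ = ∑ u ∈ N, (A u).card + (q + 1) + M := by rw [hcardN]
  linarith
end

section
/- Let q be an even integer with q ≥ 6 and let G be a C₄-free simple graph on q²+q vertices with maximum degree at most q+1 and at least (1/2)·q·(q+1)² − q edges. Then |X_{q+1}| − |X_{≤ q−1}| ≤ q² − q + 1, where X_{q+1} is the set of vertices of degree q+1 and X_{≤ q−1} is the set of vertices of degree at most q−1. -/
open Finset SimpleGraph

namespace SimpleGraph

variable {V : Type*} {G : SimpleGraph V}

lemma even_card_of_existsUnique_adj {s : Finset V}
    (h : ∀ v ∈ s, ∃! w, w ∈ s ∧ G.Adj v w) : Even #s := by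
  have hM : ((⊤ : G.Subgraph).induce (s : Set V)).IsMatching := by
    intro v hv
    obtain ⟨w, hw, huniq⟩ := h v hv
    exact ⟨w, ⟨hv, hw.1, hw.2⟩, fun w' hw' => huniq w' ⟨hw'.2.1, hw'.2.2⟩⟩
  let _ : Fintype ((⊤ : G.Subgraph).induce (s : Set V)).verts :=
    inferInstanceAs (Fintype (s : Set V))
  simpa using hM.even_card

variable [Fintype V] [DecidableRel G.Adj] {q : ℕ}

lemma sum_degree_mul_eq_sum_sum_neighborFinset (f : V → ℕ) :
    ∑ v, G.degree v * f v = ∑ v, ∑ u ∈ G.neighborFinset v, f u := by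
  simp_rw [neighborFinset_eq_filter (G := G), sum_filter]
  rw [sum_comm]
  simp_rw [G.adj_comm _, ← sum_filter, sum_const, smul_eq_mul, ← neighborFinset_eq_filter,
    card_neighborFinset_eq_degree]

lemma sum_degree_mul_min_le :
    ∑ v, G.degree v * min (q + 1 - G.degree v) 2 ≤ q * ∑ v, min (q + 1 - G.degree v) 2 := by
  rw [mul_sum]
  refine sum_le_sum fun v _ => ?_
  rcases le_or_gt (G.degree v) q with h | h
  · exact Nat.mul_le_mul_right _ h
  · simp [show q + 1 - G.degree v = 0 by omega]

lemma card_le_card_filter_degree_eq_add_sum (hΔ : ∀ v, G.degree v ≤ q + 1) :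
    Fintype.card V ≤ #{v | G.degree v = q + 1} + ∑ v, min (q + 1 - G.degree v) 2 := by
  rw [Fintype.card_eq_sum_ones, card_filter, ← sum_add_distrib]
  exact sum_le_sum fun v _ => by have := hΔ v; split_ifs <;> omega

lemma card_filter_degree_eq_add_sum_le :
    #{v | G.degree v = q + 1} + ∑ v, min (q + 1 - G.degree v) 2 ≤
      Fintype.card V + #{v | G.degree v ≤ q - 1} := by
  rw [Fintype.card_eq_sum_ones, card_filter, card_filter, ← sum_add_distrib, ← sum_add_distrib]
  exact sum_le_sum fun v _ => by split_ifs <;> omega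

end SimpleGraph

namespace C4Free

variable {V : Type*} [Fintype V] [DecidableEq V] {G : SimpleGraph V} [DecidableRel G.Adj]
  {q : ℕ}

lemma pairwiseDisjoint_erase_neighborFinset (hG : C4Free G) (v : V) :
    (G.neighborFinset v : Set V).PairwiseDisjoint fun u => (G.neighborFinset u).erase v := by
  intro u₁ hu₁ u₂ hu₂ hne
  simp only [coe_neighborFinset, mem_neighborSet] at hu₁ hu₂
  refine disjoint_left.mpr fun w hw₁ hw₂ => ?_
  simp only [mem_erase, mem_neighborFinset] at hw₁ hw₂
  exact hw₁.1 (hG u₁ u₂ hne ⟨hw₁.2, hw₂.2⟩ ⟨hu₁.symm, hu₂.symm⟩)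

lemma card_biUnion_erase_neighborFinset (hG : C4Free G) (v : V) :
    #((G.neighborFinset v).biUnion fun u => (G.neighborFinset u).erase v) =
      ∑ u ∈ G.neighborFinset v, (G.degree u - 1) := by
  rw [card_biUnion (hG.pairwiseDisjoint_erase_neighborFinset v)]
  refine sum_congr rfl fun u hu => ?_
  rw [card_erase_of_mem (by simpa [adj_comm] using hu), card_neighborFinset_eq_degree]

lemma sum_degree_sub_one_le (hG : C4Free G) (v : V) :
    ∑ u ∈ G.neighborFinset v, (G.degree u - 1) ≤ Fintype.card V - 1 := by
  rw [← hG.card_biUnion_erase_neighborFinset, ← card_univ, ← card_erase_of_mem (mem_univ v)]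
  exact card_le_card fun w => by simp +contextual

lemma even_degree_of_sum_degree_sub_one_eq (hG : C4Free G) (v : V)
    (h : ∑ u ∈ G.neighborFinset v, (G.degree u - 1) = Fintype.card V - 1) :
    Even (G.degree v) := by
  have hcover : (G.neighborFinset v).biUnion (fun u => (G.neighborFinset u).erase v) =
      univ.erase v := by
    refine eq_of_subset_of_card_le (fun w => by simp +contextual) ?_
    rw [hG.card_biUnion_erase_neighborFinset, h, card_erase_of_mem (mem_univ v), card_univ]
  rw [← card_neighborFinset_eq_degree]
  refine even_card_of_existsUnique_adj (G := G) fun w hw => ?_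
  have hwv : w ≠ v := by rintro rfl; simp at hw
  obtain ⟨u, hu, hwu⟩ := mem_biUnion.mp (hcover ▸ mem_erase.mpr ⟨hwv, mem_univ w⟩)
  simp only [mem_erase, mem_neighborFinset] at hu hw hwu ⊢
  exact ⟨u, ⟨hu, hwu.2.symm⟩, fun u' ⟨hu', hwu'⟩ => hG w v hwv ⟨hwu', hu'⟩ ⟨hwu.2.symm, hu⟩⟩

lemma two_le_sum_sub_degree (hG : C4Free G) (hq : Even q) (hV : Fintype.card V = q ^ 2 + q)
    {v : V} (hv : G.degree v = q + 1) :
    2 ≤ ∑ u ∈ G.neighborFinset v, (q + 1 - G.degree u) := by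
  have hle := hG.sum_degree_sub_one_le v
  have hne : ∑ u ∈ G.neighborFinset v, (G.degree u - 1) ≠ Fintype.card V - 1 := fun h => by
    simpa [hv, Nat.even_add_one, hq] using hG.even_degree_of_sum_degree_sub_one_eq v h
  have hsplit : (q + 1) * q ≤ ∑ u ∈ G.neighborFinset v, (q + 1 - G.degree u) +
      ∑ u ∈ G.neighborFinset v, (G.degree u - 1) :=
    calc (q + 1) * q = ∑ _ ∈ G.neighborFinset v, q := by simp [hv]
      _ ≤ _ := sum_le_sum fun u _ => by omega
      _ = _ := sum_add_distrib
  rw [hV] at hle hne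
  have hsq : (q + 1) * q = q ^ 2 + q := by ring
  omega

lemma two_le_sum_min_sub_degree (hG : C4Free G) (hq : Even q) (hV : Fintype.card V = q ^ 2 + q)
    {v : V} (hv : G.degree v = q + 1) :
    2 ≤ ∑ u ∈ G.neighborFinset v, min (q + 1 - G.degree u) 2 :=
  (le_min (hG.two_le_sum_sub_degree hq hV hv) le_rfl).trans <|
    le_sum_of_subadditive (fun x => min x 2) (by simp) (fun _ _ => by omega) _ _

lemma two_mul_card_le_sum_degree_mul (hG : C4Free G) (hq : Even q)
    (hV : Fintype.card V = q ^ 2 + q) :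
    2 * #{v | G.degree v = q + 1} ≤ ∑ v, G.degree v * min (q + 1 - G.degree v) 2 := by
  rw [sum_degree_mul_eq_sum_sum_neighborFinset, mul_comm, ← smul_eq_mul, ← sum_const]
  calc ∑ _ ∈ {v | G.degree v = q + 1}, 2
      ≤ ∑ v ∈ {v | G.degree v = q + 1}, ∑ u ∈ G.neighborFinset v, min (q + 1 - G.degree u) 2 :=
        sum_le_sum fun v hv => hG.two_le_sum_min_sub_degree hq hV (mem_filter.mp hv).2
    _ ≤ ∑ v, ∑ u ∈ G.neighborFinset v, min (q + 1 - G.degree u) 2 :=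
        sum_le_sum_of_subset (subset_univ _)

end C4Free

theorem degCount_difference_bound_general (q : ℕ) (hqe : Even q)
    (G : SimpleGraph (Fin (q ^ 2 + q))) [DecidableRel G.Adj] (hG : C4Free G)
    (hΔ : ∀ v, G.degree v ≤ q + 1) :
    ((Finset.univ.filter fun v => G.degree v = q + 1).card : ℤ) -
      ((Finset.univ.filter fun v => G.degree v ≤ q - 1).card : ℤ) ≤
      q ^ 2 - q + 1 := by
  have hfull := (hG.two_mul_card_le_sum_degree_mul hqe (Fintype.card_fin _)).trans
    (sum_degree_mul_min_le (q := q))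
  have hlow := card_le_card_filter_degree_eq_add_sum hΔ
  have hupp := card_filter_degree_eq_add_sum_le (G := G) (q := q)
  rw [Fintype.card_fin] at hlow hupp
  set a := #{v | G.degree v = q + 1}
  set b := #{v | G.degree v ≤ q - 1}
  set M := ∑ v, min (q + 1 - G.degree v) 2
  zify at hfull hlow hupp
  nlinarith

/-- Let `q ≥ 6` be even and let `G` be a `C₄`-free graph on `q² + q` vertices
with maximum degree at most `q + 1` and at least `E₀ = q(q+1)²/2 - q` edges.
Then `|X_{q+1}| - |X_{≤ q-1}| ≤ q² - q + 1`, where `X_{q+1}` is the set of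
vertices of degree `q + 1` and `X_{≤ q-1}` the set of vertices of degree at
most `q - 1`. -/
theorem degCount_difference_bound (q : ℕ) (hq : 6 ≤ q) (hqe : Even q)
    (G : SimpleGraph (Fin (q ^ 2 + q))) [DecidableRel G.Adj] (hG : C4Free G)
    (hΔ : ∀ v, G.degree v ≤ q + 1)
    (he : q * (q + 1) ^ 2 / 2 - q ≤ G.edgeFinset.card) :
    ((Finset.univ.filter fun v => G.degree v = q + 1).card : ℤ) -
      ((Finset.univ.filter fun v => G.degree v ≤ q - 1).card : ℤ) ≤
      q ^ 2 - q + 1 :=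
  degCount_difference_bound_general q hqe G hG hΔ
end

section
/- Let q be a natural number with q ≥ 6 and suppose G is a C₄-free simple graph on q²+q vertices with exactly (1/2)·q·(q+1)² − q + 1 edges. Then every vertex v of G whose degree δ satisfies 2δ ≤ q+2 (i.e., δ ≤ q/2 + 1) is adjacent to every vertex of G of degree q+2. -/
/-!
In a `C₄`-free graph distinct vertices have codegree at most one, so counting paths of length
two gives `∑ d(c)² ≤ ∑ d(c) + n(n - 1) - Z`, where `Z` counts ordered pairs of distinct vertices
without a common neighbour. If `v` (of degree `δ`) were not adjacent to `u` (of degree `q + 2`),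
many such pairs would be forced: `(v, w)` for all but `∑_{c ∼ v} d(c) - δ` vertices `w ≠ v`, and
`(x, w)` for `x ∼ u` and `w ∉ {u, v} ∪ N(u)`, except for at most `d(w)` choices of `x` per `w`
(a path `u x c w` is determined by `c ∼ w`). On the other hand, with `ε_c = d(c) - (q + 1)`,
`∑ ε_c² ≥ ε_v² + ∑_{c ∼ v} (2ε_c - 1) - ∑_{c ∼ u} (2ε_c + 1)`. Combining the two, the degree sums
over `N(v)` and `N(u)` cancel, and the exact edge count leaves a quadratic inequality in `δ` that
fails when `2δ ≤ q + 2` and `q ≥ 6`.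
-/

open Finset

lemma two_mul_sum_sub_card_sub_le_sum_sq {ι : Type*} [DecidableEq ι] {s A B : Finset ι}
    (hA : A ⊆ s) (hB : B ⊆ s) (f : ι → ℤ) :
    2 * ∑ i ∈ A, f i - #A - (2 * ∑ i ∈ B, f i + #B) ≤ ∑ i ∈ s, f i ^ 2 := by
  have hpoint : ∀ i ∈ s, (if i ∈ A then 2 * f i - 1 else 0) + (if i ∈ B then -2 * f i - 1 else 0)
      ≤ f i ^ 2 := by
    intro i _
    split_ifs <;> nlinarith [sq_nonneg (f i - 1), sq_nonneg (f i + 1)]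
  have := sum_le_sum hpoint
  rw [sum_add_distrib, sum_ite_mem, sum_ite_mem, inter_eq_right.2 hA, inter_eq_right.2 hB] at this
  simp only [sum_sub_distrib, ← mul_sum, sum_const, nsmul_eq_mul, mul_one] at this
  linarith

namespace SimpleGraph

variable {V : Type*} [Fintype V] [DecidableEq V] (G : SimpleGraph V) [DecidableRel G.Adj]

def codegree (a b : V) : ℕ := #(G.neighborFinset a ∩ G.neighborFinset b)

variable {G}

lemma codegree_comm (a b : V) : G.codegree a b = G.codegree b a := by
  rw [codegree, codegree, inter_comm]

lemma codegree_self (a : V) : G.codegree a a = G.degree a := by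
  rw [codegree, inter_self, card_neighborFinset_eq_degree]

lemma codegree_eq_sum (a b : V) :
    G.codegree a b = ∑ c, (if a ∈ G.neighborFinset c then 1 else 0) *
      (if b ∈ G.neighborFinset c then 1 else 0) := by
  simp only [boole_mul, ← ite_and, sum_boole, Nat.cast_id, codegree]
  congr 1
  ext c
  simp [adj_comm]

lemma sum_sum_codegree (S T : Finset V) :
    ∑ a ∈ S, ∑ b ∈ T, G.codegree a b
      = ∑ c, #(S ∩ G.neighborFinset c) * #(T ∩ G.neighborFinset c) := by
  simp only [← filter_mem_eq_inter, card_filter, sum_mul_sum, codegree_eq_sum]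
  exact (sum_congr rfl fun _ _ => sum_comm).trans sum_comm

lemma sum_sum_codegree_univ : ∑ a, ∑ b, G.codegree a b = ∑ c, G.degree c ^ 2 := by
  simpa [sq] using sum_sum_codegree (G := G) univ univ

lemma sum_codegree (a : V) : ∑ b, G.codegree a b = ∑ c ∈ G.neighborFinset a, G.degree c := by
  have := sum_sum_codegree (G := G) {a} univ
  simp only [sum_singleton, univ_inter, card_neighborFinset_eq_degree] at this
  rw [this, neighborFinset_eq_filter, sum_filter]
  refine sum_congr rfl fun c _ => ?_
  by_cases h : G.Adj a c <;> simp [h, adj_comm]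

end SimpleGraph

namespace C4Free

open SimpleGraph

variable {V : Type*} [Fintype V] [DecidableEq V] {G : SimpleGraph V} [DecidableRel G.Adj]
  (hG : C4Free G)
include hG

lemma codegree_le_one {a b : V} (h : a ≠ b) : G.codegree a b ≤ 1 :=
  card_le_one.2 fun x hx y hy =>
    hG a b h (by simpa [codegree] using hx) (by simpa [codegree] using hy)

lemma sum_codegree_le_degree {u w : V} (huw : ¬ G.Adj u w) :
    ∑ x ∈ G.neighborFinset u, G.codegree x w ≤ G.degree w := by
  have hcount := sum_sum_codegree (G := G) (G.neighborFinset u) {w}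
  simp only [sum_singleton] at hcount
  rw [hcount, ← card_neighborFinset_eq_degree, neighborFinset_eq_filter (G := G) (v := w),
    card_filter]
  refine sum_le_sum fun c _ => ?_
  by_cases hwc : G.Adj w c
  · have hcu : u ≠ c := by rintro rfl; exact huw hwc.symm
    rw [singleton_inter_of_mem (by simpa [adj_comm] using hwc), card_singleton, mul_one, if_pos hwc]
    exact hG.codegree_le_one hcu
  · rw [singleton_inter_of_notMem (by simpa [adj_comm] using hwc)]
    simp [hwc]

lemma sum_sq_degree_add_two_mul_card_le (X : Finset (V × V))
    (hdiag : ∀ a b, (a, b) ∈ X → a ≠ b) (hswap : ∀ a b, (a, b) ∈ X → (b, a) ∉ X) :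
    ∑ c, G.degree c ^ 2 + Fintype.card V + 2 * #X
      ≤ ∑ c, G.degree c + Fintype.card V ^ 2 + 2 * ∑ p ∈ X, G.codegree p.1 p.2 := by
  set Z := X ∪ X.image Prod.swap
  have hdisj : Disjoint X (X.image Prod.swap) :=
    disjoint_left.2 fun p hp hp' => by
      obtain ⟨⟨a, b⟩, hab, rfl⟩ := mem_image.1 hp'
      exact hswap a b hab hp
  have hZ : Z ⊆ univ.offDiag := by
    intro p hp
    rcases mem_union.1 hp with hp | hp
    · simpa using hdiag p.1 p.2 hp
    · obtain ⟨⟨a, b⟩, hab, rfl⟩ := mem_image.1 hp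
      simpa using (hdiag a b hab).symm
  have hZcard : #Z = 2 * #X := by
    rw [card_union_of_disjoint hdisj, card_image_of_injective _ Prod.swap_injective, two_mul]
  have hZsum : ∑ p ∈ Z, G.codegree p.1 p.2 = 2 * ∑ p ∈ X, G.codegree p.1 p.2 := by
    rw [sum_union hdisj, sum_image fun _ _ _ _ h => Prod.swap_injective h, two_mul]
    simp [codegree_comm]
  have hrest : ∑ p ∈ univ.offDiag \ Z, G.codegree p.1 p.2 ≤ #(univ.offDiag \ Z) :=
    card_eq_sum_ones (univ.offDiag \ Z) ▸ sum_le_sum fun p hp =>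
      hG.codegree_le_one (mem_offDiag.1 (mem_sdiff.1 hp).1).2.2
  have hsplit : ∑ c, G.degree c ^ 2 = ∑ c, G.degree c
      + ∑ p ∈ univ.offDiag \ Z, G.codegree p.1 p.2 + ∑ p ∈ Z, G.codegree p.1 p.2 := by
    rw [← sum_sum_codegree_univ, ← sum_product' (f := G.codegree), ← diag_union_offDiag,
      sum_union (disjoint_diag_offDiag _), sum_diag, add_assoc, sum_sdiff hZ]
    simp [codegree_self]
  have hcard : #(univ.offDiag \ Z) + #Z + Fintype.card V = Fintype.card V ^ 2 := by
    rw [card_sdiff_add_card_eq_card hZ, offDiag_card, card_univ, sq]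
    exact Nat.sub_add_cancel (Nat.le_mul_self _)
  omega

lemma sum_sq_degree_add_le_of_not_adj {u v : V} (hvu : ¬ G.Adj v u) (hne : v ≠ u) :
    (∑ c, G.degree c ^ 2 : ℤ) + 3 * Fintype.card V
      + 2 * G.degree u * (Fintype.card V - G.degree u - 2) + 2 * G.degree u
      + 2 * ∑ c ∈ G.neighborFinset u, (G.degree c : ℤ) + 4 * G.degree v
      ≤ 3 * ∑ c, (G.degree c : ℤ) + Fintype.card V ^ 2
      + 2 * ∑ c ∈ G.neighborFinset v, (G.degree c : ℤ) + 2 := by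
  set N := G.neighborFinset u
  set T := (insert u (insert v N))ᶜ
  have hvN : v ∉ N := by simpa [N, adj_comm] using hvu
  have huN : u ∉ N := by simp [N]
  have hT : ∀ w ∈ T, w ≠ v ∧ w ∉ N := by simp +contextual [T]
  have hpairs := hG.sum_sq_degree_add_two_mul_card_le ({v} ×ˢ {v}ᶜ ∪ N ×ˢ T)
    (by
      simp only [mem_union, mem_product, mem_singleton, mem_compl]
      rintro a b (⟨rfl, hb⟩ | ⟨ha, hb⟩) rfl
      exacts [hb rfl, (hT a hb).2 ha])
    (by
      simp only [mem_union, mem_product, mem_singleton, mem_compl]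
      rintro a b (⟨rfl, hb⟩ | ⟨ha, hb⟩) (⟨rfl, _⟩ | ⟨hb', ha'⟩)
      exacts [hb rfl, (hT a ha').1 rfl, (hT b hb).1 rfl, (hT b hb).2 hb'])
  have hdisj : Disjoint ({v} ×ˢ {v}ᶜ) (N ×ˢ T) :=
    disjoint_product.2 (Or.inl (disjoint_singleton_left.2 hvN))
  have hcardT : #T + (G.degree u + 2) = Fintype.card V := by
    rw [← card_compl_add_card (insert u (insert v N)),
      card_insert_of_notMem (by simp [hne.symm, huN]), card_insert_of_notMem hvN,
      card_neighborFinset_eq_degree]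
  have hcardX : #({v} ×ˢ {v}ᶜ ∪ N ×ˢ T) + 1 = Fintype.card V + G.degree u * #T := by
    rw [card_union_of_disjoint hdisj, card_product, card_product, card_singleton, one_mul,
      card_neighborFinset_eq_degree, ← card_compl_add_card {v}, card_singleton]
    ring
  have hsumX : ∑ p ∈ {v} ×ˢ {v}ᶜ ∪ N ×ˢ T, G.codegree p.1 p.2 + G.degree v
      ≤ ∑ c ∈ G.neighborFinset v, G.degree c + ∑ w ∈ T, G.degree w := by
    have hrow : ∑ w ∈ ({v} : Finset V)ᶜ, G.codegree v w + G.degree v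
        = ∑ c ∈ G.neighborFinset v, G.degree c := by
      rw [← sum_codegree, ← sum_compl_add_sum {v}, sum_singleton, codegree_self]
    have hfar : ∑ w ∈ T, ∑ x ∈ N, G.codegree x w ≤ ∑ w ∈ T, G.degree w :=
      sum_le_sum fun w hw => hG.sum_codegree_le_degree fun h => (hT w hw).2 (by simpa [N] using h)
    rw [sum_union hdisj, sum_product, sum_product, sum_singleton, sum_comm (s := N)]
    dsimp only
    omega
  have hsumT : ∑ w ∈ T, G.degree w + (G.degree u + G.degree v + ∑ c ∈ N, G.degree c)
      = ∑ c, G.degree c := by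
    rw [← sum_compl_add_sum (insert u (insert v N)), sum_insert (by simp [hne.symm, huN]),
      sum_insert hvN, add_assoc]
  have hT' : (Fintype.card V : ℤ) - G.degree u - 2 = #T := by omega
  rw [hT']
  zify at hpairs hcardX hsumX hsumT
  linarith

lemma sq_degree_sub_add_le_of_not_adj {u v : V} (hvu : ¬ G.Adj v u) (hne : v ≠ u) (t : ℤ) :
    ((G.degree v : ℤ) - t) ^ 2 + (3 - 2 * t) * G.degree v + (2 * t + 1) * G.degree u
      + 2 * G.degree u * (Fintype.card V - G.degree u - 2) + 3 * Fintype.card V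
      ≤ (3 - 2 * t) * ∑ c, (G.degree c : ℤ) + Fintype.card V ^ 2 + Fintype.card V * t ^ 2 + 2 := by
  have hdev := two_mul_sum_sub_card_sub_le_sum_sq (s := {v}ᶜ) (A := G.neighborFinset v)
    (B := G.neighborFinset u) (by simp) (by simpa [adj_comm] using hvu)
    (fun c => (G.degree c : ℤ) - t)
  have hsplit := sum_compl_add_sum {v} (fun c => ((G.degree c : ℤ) - t) ^ 2)
  have hcount := hG.sum_sq_degree_add_le_of_not_adj hvu hne
  simp only [sum_sub_distrib, sum_const, card_neighborFinset_eq_degree, nsmul_eq_mul, sub_sq,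
    sum_add_distrib, ← mul_sum, ← sum_mul, card_univ, sum_singleton, card_singleton,
    Nat.cast_one] at hsplit hdev
  linarith

end C4Free

lemma cast_two_mul_E₀_add_one (q : ℕ) :
    ((2 * (q * (q + 1) ^ 2 / 2 - q + 1) : ℕ) : ℤ) = q * (q + 1) ^ 2 - 2 * q + 2 := by
  have heven : 2 * (q * (q + 1) ^ 2 / 2) = q * (q + 1) ^ 2 :=
    Nat.two_mul_div_two_of_even <| by
      rw [sq, ← mul_assoc]; exact (Nat.even_mul_succ_self q).mul_right _
  rcases Nat.eq_zero_or_pos q with rfl | hpos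
  · rfl
  have hle : q ≤ q * (q + 1) ^ 2 / 2 := by
    rw [Nat.le_div_iff_mul_le two_pos]
    exact Nat.mul_le_mul_left q (by nlinarith)
  zify [hle] at heven ⊢
  linarith

/-- Let `q ≥ 6` and let `G` be a `C₄`-free graph on `q² + q` vertices with
exactly `E₀ + 1 = q(q+1)²/2 - q + 1` edges.  Then every vertex `v` of degree
`δ` with `2δ ≤ q + 2` (i.e. `δ ≤ q/2 + 1`) is adjacent to every vertex of
degree `q + 2`. -/
theorem small_degree_adj_all_max_degree (q : ℕ) (hq : 6 ≤ q)
    (G : SimpleGraph (Fin (q ^ 2 + q))) [DecidableRel G.Adj] (hG : C4Free G)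
    (he : G.edgeFinset.card = q * (q + 1) ^ 2 / 2 - q + 1)
    (v : Fin (q ^ 2 + q)) (hv : 2 * G.degree v ≤ q + 2) :
    ∀ u, G.degree u = q + 2 → G.Adj v u := by
  intro u hu
  by_contra hvu
  have hne : v ≠ u := by rintro rfl; omega
  have hsum : ∑ c, (G.degree c : ℤ) = q * (q + 1) ^ 2 - 2 * q + 2 := by
    rw [← Nat.cast_sum, G.sum_degrees_eq_twice_card_edges, he, cast_two_mul_E₀_add_one]
  have key := hG.sq_degree_sub_add_le_of_not_adj hvu hne (q + 1)
  rw [hsum, hu, Fintype.card_fin] at key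
  push_cast at key
  have hq' : (6 : ℤ) ≤ q := by exact_mod_cast hq
  have hv' : 2 * (G.degree v : ℤ) ≤ q + 2 := by exact_mod_cast hv
  have hδ : 0 ≤ ((q : ℤ) + 2 - 2 * G.degree v) * (7 * q - 2 * G.degree v) :=
    mul_nonneg (by linarith) (by linarith)
  nlinarith
end
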